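/- Let A ∈ ℂ ∖ [−1, ∞), ζ± = (1 ± √(A+1))², r = ζ₊ − ζ₋ = 4√(A+1), and parametrize the segment [ζ₋, ζ₊] by t(s) = r s + ζ₋, s ∈ [0,1]. Then the function ℓ(s) = Im(r)·s + Im( (r²/|r|²)·conj(ζ₋) ) is a nonconstant affine function of s; consequently ℓ changes sign at most once on [0,1]. -/

import Mathlib

open Filter

/-- Principal square root on `ℂ`. -/
noncomputable def sqrtc (z : ℂ) : ℂ := z ^ ((1 : ℂ) / 2)

/-- The root `ζ₊(A) = (1 + √(A+1))²` of `D_A(z) = (z−A)² − 4z`. -/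
noncomputable def zetaP (A : ℂ) : ℂ := (1 + sqrtc (A + 1)) ^ 2

/-- The root `ζ₋(A) = (1 − √(A+1))²` of `D_A(z) = (z−A)² − 4z`. -/
noncomputable def zetaM (A : ℂ) : ℂ := (1 - sqrtc (A + 1)) ^ 2

/-- The affine function `ℓ(s) = Im(r)·s + Im((r²/|r|²)·conj(ζ₋))`, where
`r = ζ₊ − ζ₋ = 4√(A+1)`, arising from the parametrization `t(s) = r s + ζ₋` of the
segment `[ζ₋, ζ₊]`. -/
noncomputable def ellFun (A : ℂ) (s : ℝ) : ℝ :=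
  (4 * sqrtc (A + 1)).im * s +
    (((4 * sqrtc (A + 1)) ^ 2 / ((Complex.normSq (4 * sqrtc (A + 1)) : ℝ) : ℂ)) *
      (starRingEnd ℂ) (zetaM A)).im

/-! The slope `Im r = 4 Im √(A+1)` is nonzero: a square root with vanishing imaginary part
has a nonnegative real square, while `A + 1 ∉ [0, ∞)`. Being affine, `ℓ` is monotone or
antitone, and a monotone function cannot change sign twice: between two sign changes the middle
value would have to lie strictly above (or below) both neighbours. -/

section SignChanges

variable {R : Type*} [Ring R] [LinearOrder R] [IsStrictOrderedRing R]

theorem Monotone.not_mul_neg_and_mul_neg {α : Type*} [Preorder α] {f : α → R} (hf : Monotone f)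
    {x y z : α} (hxy : x ≤ y) (hyz : y ≤ z) : ¬(f x * f y < 0 ∧ f y * f z < 0) := by
  rintro ⟨hxy', hyz'⟩
  have := hf hxy
  have := hf hyz
  rcases mul_neg_iff.1 hxy' with ⟨_, _⟩ | ⟨_, _⟩ <;>
    rcases mul_neg_iff.1 hyz' with ⟨_, _⟩ | ⟨_, _⟩ <;> order

theorem Antitone.not_mul_neg_and_mul_neg {α : Type*} [Preorder α] {f : α → R} (hf : Antitone f)
    {x y z : α} (hxy : x ≤ y) (hyz : y ≤ z) : ¬(f x * f y < 0 ∧ f y * f z < 0) := by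
  simpa only [Pi.neg_apply, neg_mul_neg] using hf.neg.not_mul_neg_and_mul_neg hxy hyz

theorem monotone_or_antitone_mul_add_const (a b : R) :
    Monotone (fun s ↦ a * s + b) ∨ Antitone (fun s ↦ a * s + b) := by
  rcases le_total 0 a with ha | ha
  · exact .inl ((monotone_mul_left_of_nonneg ha).add_const b)
  · exact .inr ((Monotone.const_mul_of_nonpos monotone_id ha).add_const b)

end SignChanges

theorem sq_im_eq_zero_and_re_nonneg_of_im_eq_zero {w : ℂ} (hw : w.im = 0) :
    (w ^ 2).im = 0 ∧ 0 ≤ (w ^ 2).re := by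
  simp [sq, hw, mul_self_nonneg]

theorem sqrtc_sq (z : ℂ) : sqrtc z ^ 2 = z := by
  simp [sqrtc, one_div]

theorem im_sqrtc_ne_zero {z : ℂ} (hz : ¬(z.im = 0 ∧ 0 ≤ z.re)) : (sqrtc z).im ≠ 0 :=
  fun h ↦ hz (sqrtc_sq z ▸ sq_im_eq_zero_and_re_nonneg_of_im_eq_zero h)

theorem ellFun_monotone_or_antitone (A : ℂ) : Monotone (ellFun A) ∨ Antitone (ellFun A) :=
  monotone_or_antitone_mul_add_const _ _

/-- For `A ∈ ℂ ∖ [−1,∞)`, `ℓ` is a nonconstant affine function of `s`, and consequently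
it changes sign at most once on `[0,1]`. -/
theorem ell_nonconstant_sign_change (A : ℂ) (hA : ¬(A.im = 0 ∧ -1 ≤ A.re)) :
    (¬((4 * sqrtc (A + 1)).im = 0 ∧
        (((4 * sqrtc (A + 1)) ^ 2 / ((Complex.normSq (4 * sqrtc (A + 1)) : ℝ) : ℂ)) *
          (starRingEnd ℂ) (zetaM A)).im = 0)) ∧
    ¬ ∃ s₁ s₂ s₃ : ℝ, s₁ ∈ Set.Icc (0 : ℝ) 1 ∧ s₂ ∈ Set.Icc (0 : ℝ) 1 ∧
        s₃ ∈ Set.Icc (0 : ℝ) 1 ∧ s₁ < s₂ ∧ s₂ < s₃ ∧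
        ellFun A s₁ * ellFun A s₂ < 0 ∧ ellFun A s₂ * ellFun A s₃ < 0 := by
  have hA₁ : ¬((A + 1).im = 0 ∧ 0 ≤ (A + 1).re) := by
    simpa [neg_le_iff_add_nonneg', add_comm] using hA
  refine ⟨fun ⟨hr, _⟩ ↦ im_sqrtc_ne_zero hA₁ ?_, ?_⟩
  · simpa using hr
  rintro ⟨s₁, s₂, s₃, -, -, -, h₁₂, h₂₃, hsign⟩
  rcases ellFun_monotone_or_antitone A with hmono | hanti
  · exact hmono.not_mul_neg_and_mul_neg h₁₂.le h₂₃.le hsign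
  · exact hanti.not_mul_neg_and_mul_neg h₁₂.le h₂₃.le hsign
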